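/- Let t, n be natural numbers with t > 2, gcd(t,n) = 1, and t < n/2, and let K_t = 2^{2t} - 2^t + 1 be the Kasami exponent. Then for every i with 0 < i < n and gcd(i, n) = 1, and every natural number a, K_t is not congruent to 2^a · e(t+1, i) modulo 2^n - 1. Equivalently, K_t is never in the cyclotomic coset of e(t+1, i) = ∑_{j=0}^{t} 2^{ji}. -/

import Mathlib

open Finset

private lemma sum_range_two_pow (k : ℕ) : ∑ i ∈ Finset.range k, 2 ^ i = 2 ^ k - 1 := by
  induction k with
  | zero => simp
  | succ k ih =>
    have h : 1 ≤ 2 ^ k := Nat.one_le_two_pow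
    rw [Finset.sum_range_succ, ih, pow_succ]
    omega

private lemma sum_Ico_two_pow (a b : ℕ) (h : a ≤ b) :
    ∑ i ∈ Finset.Ico a b, 2 ^ i = 2 ^ b - 2 ^ a := by
  have key : ∑ i ∈ Finset.range a, 2 ^ i + ∑ i ∈ Finset.Ico a b, 2 ^ i
      = ∑ i ∈ Finset.range b, 2 ^ i := by
    rw [Finset.range_eq_Ico, Finset.range_eq_Ico]
    exact Finset.sum_Ico_consecutive (fun i : ℕ => (2:ℕ) ^ i) (Nat.zero_le a) h
  rw [sum_range_two_pow, sum_range_two_pow] at key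
  have ha : 1 ≤ 2 ^ a := Nat.one_le_two_pow
  have hb : 2 ^ a ≤ 2 ^ b := Nat.pow_le_pow_right (by norm_num) h
  omega

private lemma two_pow_mod_pow (n k : ℕ) (hn : 0 < n) :
    (2:ℕ) ^ k % (2 ^ n - 1) = 2 ^ (k % n) % (2 ^ n - 1) := by
  have h1 : (1:ℕ) ≡ 2 ^ n [MOD 2 ^ n - 1] :=
    (Nat.modEq_iff_dvd' Nat.one_le_two_pow).mpr dvd_rfl
  have h2 : (1:ℕ) ≡ (2 ^ n) ^ (k / n) [MOD 2 ^ n - 1] := by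
    simpa using h1.pow (k / n)
  have h3 : (2:ℕ) ^ (k % n) ≡ (2 ^ n) ^ (k / n) * 2 ^ (k % n) [MOD 2 ^ n - 1] := by
    simpa using h2.mul_right (2 ^ (k % n))
  have h4 : (2 ^ n : ℕ) ^ (k / n) * 2 ^ (k % n) = 2 ^ k := by
    rw [← pow_mul, ← pow_add]
    congr 1
    have := Nat.div_add_mod k n
    omega
  rw [h4] at h3
  exact h3.symm

/-- Counting lemma: number of `j ≤ t` with `(j+u) % n ≤ t`. -/
private lemma count_shift (n t u : ℕ) (h2t : 2 * t < n) (hu0 : 0 < u) (hun : u < n) :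
    ((Finset.range (t + 1)).filter (fun j => (j + u) % n ≤ t)).card
      = if u ≤ t then t + 1 - u else if n - u ≤ t then t + 1 - (n - u) else 0 := by
  split_ifs with h1 h2
  · have : (Finset.range (t + 1)).filter (fun j => (j + u) % n ≤ t)
        = Finset.range (t + 1 - u) := by
      ext j
      simp only [Finset.mem_filter, Finset.mem_range]
      constructor
      · rintro ⟨hj, hc⟩
        rw [Nat.mod_eq_of_lt (by omega)] at hc
        omega
      · intro hj
        rw [Nat.mod_eq_of_lt (by omega)]
        omega
    rw [this, Finset.card_range]
  · have : (Finset.range (t + 1)).filter (fun j => (j + u) % n ≤ t)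
        = Finset.Ico (n - u) (t + 1) := by
      ext j
      simp only [Finset.mem_filter, Finset.mem_range, Finset.mem_Ico]
      constructor
      · rintro ⟨hj, hc⟩
        refine ⟨?_, hj⟩
        by_contra hlt
        rw [Nat.mod_eq_of_lt (by omega)] at hc
        omega
      · rintro ⟨hge, hj⟩
        refine ⟨hj, ?_⟩
        rw [Nat.mod_eq_sub_mod (by omega), Nat.mod_eq_of_lt (by omega)]
        omega
    rw [this, Nat.card_Ico]
  · have : (Finset.range (t + 1)).filter (fun j => (j + u) % n ≤ t) = ∅ := by
      ext j
      simp only [Finset.mem_filter, Finset.mem_range, Finset.notMem_empty, iff_false,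
        not_and]
      intro hj
      rw [Nat.mod_eq_of_lt (by omega)]
      omega
    rw [this, Finset.card_empty]

theorem stmt_17 (n t : ℕ) (ht : 2 < t) (hgcd : Nat.gcd t n = 1) (htn : 2 * t < n) :
    ∀ i a : ℕ, 0 < i → i < n → Nat.gcd i n = 1 →
      ¬ Nat.ModEq (2 ^ n - 1) (2 ^ (2 * t) - 2 ^ t + 1)
          (2 ^ a * ∑ j ∈ Finset.range (t + 1), 2 ^ (j * i)) := by
  intro i a hi0 hin hgi hmod
  have hn7 : 7 ≤ n := by omega
  set S : Finset ℕ := insert 0 (Finset.Ico t (2 * t)) with hS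
  set g : ℕ → ℕ := fun j => (a + j * i) % n with hg
  set T : Finset ℕ := (Finset.range (t + 1)).image g with hT
  -- K as a sum of powers of 2
  have hK : 2 ^ (2 * t) - 2 ^ t + 1 = ∑ s ∈ S, 2 ^ s := by
    rw [hS, Finset.sum_insert (by simp only [Finset.mem_Ico]; omega), sum_Ico_two_pow t (2 * t) (by omega)]
    have h1 : (2:ℕ) ^ t ≤ 2 ^ (2 * t) := Nat.pow_le_pow_right (by norm_num) (by omega)
    have h2 : (1:ℕ) ≤ 2 ^ t := Nat.one_le_two_pow
    simp only [pow_zero]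
    omega
  -- injectivity of g on range (t+1)
  have hginj : Set.InjOn g (Finset.range (t + 1)) := by
    intro j hj j' hj' hjj
    simp only [Finset.coe_range, Set.mem_Iio] at hj hj'
    have h1 : a + j * i ≡ a + j' * i [MOD n] := by
      simpa [Nat.ModEq, hg] using hjj
    have h2 : j * i ≡ j' * i [MOD n] := h1.add_left_cancel' a
    have h3 : j ≡ j' [MOD n] := Nat.ModEq.cancel_right_of_coprime (by
      rw [Nat.gcd_comm]; exact hgi) h2
    have := h3.eq_of_lt_of_lt (by omega) (by omega)
    exact this
  -- the RHS is congruent to the sum over T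
  have hTmod : (2 ^ a * ∑ j ∈ Finset.range (t + 1), 2 ^ (j * i)) ≡ ∑ s ∈ T, 2 ^ s [MOD 2 ^ n - 1] := by
    rw [hT, Finset.sum_image (fun x hx y hy h => hginj hx hy h), Finset.mul_sum]
    show _ % (2 ^ n - 1) = _ % (2 ^ n - 1)
    rw [Finset.sum_nat_mod, Finset.sum_nat_mod (Finset.range (t+1)) (2 ^ n - 1) (fun j => 2 ^ g j)]
    congr 1
    refine Finset.sum_congr rfl (fun j _ => ?_)
    rw [← pow_add, hg]
    exact two_pow_mod_pow n (a + j * i) (by omega)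
  have hmod2 : (∑ s ∈ S, 2 ^ s) ≡ ∑ s ∈ T, 2 ^ s [MOD 2 ^ n - 1] := by
    rw [← hK]; exact hmod.trans hTmod
  -- bounds
  have hTsub : T ⊆ Finset.range n := by
    intro x hx
    rw [hT] at hx
    simp only [Finset.mem_image] at hx
    obtain ⟨j, _, rfl⟩ := hx
    exact Finset.mem_range.mpr (Nat.mod_lt _ (by omega))
  have hTcard : T.card = t + 1 := by
    rw [hT, Finset.card_image_of_injOn hginj, Finset.card_range]
  have hNS_lt : (∑ s ∈ S, 2 ^ s) < 2 ^ n - 1 := by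
    rw [← hK]
    have h1 : (2:ℕ) ^ (2 * t) ≤ 2 ^ (n - 1) := Nat.pow_le_pow_right (by norm_num) (by omega)
    have h2 : (2:ℕ) ^ n = 2 * 2 ^ (n - 1) := by
      rw [← pow_succ']
      congr 1
      omega
    have h3 : (1:ℕ) ≤ 2 ^ t := Nat.one_le_two_pow
    have h4 : (2:ℕ) ^ t ≤ 2 ^ (2*t) := Nat.pow_le_pow_right (by norm_num) (by omega)
    have h5 : (1:ℕ) ≤ 2 ^ (n-1) := Nat.one_le_two_pow
    have h6 : (2:ℕ) ^ 1 ≤ 2 ^ t := Nat.pow_le_pow_right (by norm_num) (by omega)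
    rw [pow_one] at h6
    omega
  have hNT_lt : (∑ s ∈ T, 2 ^ s) < 2 ^ n - 1 := by
    have hne : T ≠ Finset.range n := by
      intro h
      have h2 : t + 1 = n := by rw [← hTcard, h, Finset.card_range]
      omega
    obtain ⟨s0, hs0r, hs0T⟩ : ∃ s0 ∈ Finset.range n, s0 ∉ T := by
      by_contra h
      push_neg at h
      exact hne (Finset.Subset.antisymm hTsub h)
    have hins : insert s0 T ⊆ Finset.range n := Finset.insert_subset hs0r hTsub
    have h1 : (∑ s ∈ insert s0 T, 2 ^ s) ≤ ∑ s ∈ Finset.range n, 2 ^ s :=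
      Finset.sum_le_sum_of_subset hins
    rw [Finset.sum_insert hs0T, sum_range_two_pow] at h1
    have h2 : (1:ℕ) ≤ 2 ^ s0 := Nat.one_le_two_pow
    omega
  -- equality of sets
  have hsum_eq : (∑ s ∈ S, 2 ^ s) = ∑ s ∈ T, 2 ^ s := by
    have := hmod2
    rwa [Nat.ModEq, Nat.mod_eq_of_lt hNS_lt, Nat.mod_eq_of_lt hNT_lt] at this
  have hST : S = T := Finset.geomSum_injective (le_refl 2) hsum_eq
  -- get an inverse r of i mod n
  obtain ⟨r, hrn, hr0', hir⟩ : ∃ r, r < n ∧ 0 < r ∧ i * r % n = 1 := by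
    obtain ⟨r0, -, hr0⟩ := Nat.exists_mul_mod_eq_one_of_coprime hgi (by omega)
    refine ⟨r0 % n, Nat.mod_lt _ (by omega), ?_, ?_⟩
    · rcases Nat.eq_zero_or_pos (r0 % n) with h | h
      · rw [Nat.mul_mod, h, Nat.mul_zero, Nat.zero_mod] at hr0; omega
      · exact h
    · rw [Nat.mul_mod, Nat.mod_eq_of_lt (Nat.mod_lt _ (by omega : 0 < n)), ← Nat.mul_mod]
      exact hr0
  have hirZ : (i : ZMod n) * (r : ZMod n) = 1 := by
    have := hir
    have h1 : ((i * r % n : ℕ) : ZMod n) = ((1:ℕ) : ZMod n) := by rw [this]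
    rwa [ZMod.natCast_mod, Nat.cast_mul, Nat.cast_one] at h1
  -- transfer counting from T to a count over range (t+1)
  have hPT : ∀ d : ℕ, 0 < d →
      (T.filter (fun x => (x + d) % n ∈ T)).card
        = ((Finset.range (t + 1)).filter (fun j => (j + d * r % n) % n ≤ t)).card := by
    intro d hd
    rw [hT, Finset.filter_image, Finset.card_image_of_injOn
      (hginj.mono (Finset.filter_subset _ _))]
    congr 1
    refine Finset.filter_congr (fun j hj => ?_)
    rw [Finset.mem_range] at hj
    simp only [hg, Nat.mod_add_mod, Finset.mem_image, Finset.mem_range]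
    constructor
    · rintro ⟨j', hj', heq⟩
      have hz : ((a : ZMod n) + j' * i) = a + j * i + d := by
        have h1 : ((a + j' * i : ℕ) : ZMod n) = ((a + j * i + d : ℕ) : ZMod n) := by
          rw [ZMod.natCast_eq_natCast_iff]
          simpa [Nat.ModEq] using heq
        push_cast at h1
        exact h1
      have hz2 : (j' : ZMod n) = j + d * r := by
        have h2 : (j' : ZMod n) * i = j * i + d := by
          rw [add_assoc] at hz
          exact add_left_cancel hz
        calc (j' : ZMod n) = (j' : ZMod n) * (i * r) := by rw [hirZ, mul_one]
          _ = ((j' : ZMod n) * i) * r := by ring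
          _ = ((j : ZMod n) * i + d) * r := by rw [h2]
          _ = (j : ZMod n) * (i * r) + d * r := by ring
          _ = j + d * r := by rw [hirZ, mul_one]
      have hzz : ((j + d * r % n : ℕ) : ZMod n) = ((j' : ℕ) : ZMod n) := by
        push_cast [ZMod.natCast_mod]
        rw [hz2]
      rw [ZMod.natCast_eq_natCast_iff] at hzz
      have hthis : (j + d * r % n) % n = j' % n := hzz
      rw [Nat.mod_eq_of_lt (show j' < n by omega)] at hthis
      omega
    · intro hcond
      refine ⟨(j + d * r % n) % n, by omega, ?_⟩
      have hzz : ((a + (j + d * r % n) % n * i : ℕ) : ZMod n)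
          = ((a + j * i + d : ℕ) : ZMod n) := by
        push_cast [ZMod.natCast_mod]
        have : ((j : ZMod n) + d * r) * i = j * i + d := by
          calc ((j : ZMod n) + d * r) * i = j * i + d * (i * r) := by ring
            _ = j * i + d := by rw [hirZ, mul_one]
        rw [this]
        ring
      rw [ZMod.natCast_eq_natCast_iff] at hzz
      exact hzz
  -- counts on S
  have hmemS : ∀ x, x ∈ S ↔ x = 0 ∨ (t ≤ x ∧ x < 2 * t) := by
    intro x
    simp [hS]
  have hPS1 : (S.filter (fun x => (x + 1) % n ∈ S)).card = t - 1 := by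
    have hfe : S.filter (fun x => (x + 1) % n ∈ S) = Finset.Ico t (2 * t - 1) := by
      ext x
      rw [Finset.mem_filter, hmemS, hmemS, Finset.mem_Ico]
      constructor
      · rintro ⟨hx, hc⟩
        rw [Nat.mod_eq_of_lt (by omega)] at hc
        omega
      · intro hx
        rw [Nat.mod_eq_of_lt (by omega)]
        omega
    rw [hfe, Nat.card_Ico]
    omega
  have hPS2 : (S.filter (fun x => (x + 2) % n ∈ S)).card
      = if n = 2 * t + 1 then t - 1 else t - 2 := by
    split_ifs with hcase
    · have hfe : S.filter (fun x => (x + 2) % n ∈ S)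
          = insert (2 * t - 1) (Finset.Ico t (2 * t - 2)) := by
        ext x
        rw [Finset.mem_filter, hmemS, hmemS, Finset.mem_insert, Finset.mem_Ico]
        constructor
        · rintro ⟨hx, hc⟩
          rcases Nat.lt_or_ge x (2 * t - 1) with h | h
          · rw [Nat.mod_eq_of_lt (by omega)] at hc
            omega
          · left; omega
        · rintro (rfl | hx)
          · refine ⟨by omega, ?_⟩
            have : 2 * t - 1 + 2 = n := by omega
            rw [this, Nat.mod_self]
            omega
          · rw [Nat.mod_eq_of_lt (by omega)]
            omega
      rw [hfe, Finset.card_insert_of_notMem (by simp [Finset.mem_Ico]; omega), Nat.card_Ico]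
      omega
    · have hfe : S.filter (fun x => (x + 2) % n ∈ S) = Finset.Ico t (2 * t - 2) := by
        ext x
        rw [Finset.mem_filter, hmemS, hmemS, Finset.mem_Ico]
        constructor
        · rintro ⟨hx, hc⟩
          rw [Nat.mod_eq_of_lt (by omega)] at hc
          omega
        · intro hx
          rw [Nat.mod_eq_of_lt (by omega)]
          omega
      rw [hfe, Nat.card_Ico]
      omega
  -- combine
  have hu1 : 1 * r % n = r := by rw [one_mul]; exact Nat.mod_eq_of_lt hrn
  have h1 := hPT 1 (by omega)
  rw [← hST, hPS1, hu1, count_shift n t r htn hr0' hrn] at h1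
  have hr2 : r = 2 ∨ r = n - 2 := by
    split_ifs at h1 <;> omega
  have h2 := hPT 2 (by omega)
  rw [← hST, hPS2] at h2
  rcases hr2 with rfl | hrn2
  · rw [show 2 * 2 % n = 4 by rw [Nat.mod_eq_of_lt (by omega)],
      count_shift n t 4 htn (by omega) (by omega)] at h2
    split_ifs at h2 <;> omega
  · rw [show 2 * r % n = n - 4 by
        rw [hrn2, show 2 * (n - 2) = n + (n - 4) by omega, Nat.add_mod_left,
          Nat.mod_eq_of_lt (by omega)],
      count_shift n t (n - 4) htn (by omega) (by omega)] at h2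
    split_ifs at h2 <;> omega
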